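/- arXiv:2302.02392 — 5 statements merged into one kernel-verified Lean document; each statement's English description precedes it below -/
import Mathlib

section
/- The softmax function σ: ℝ^n → ℝ^n with temperature α > 0, σ(q)_a = exp(q_a/α)/∑_b exp(q_b/α), is Lipschitz in the sense that the Euclidean norm of σ(q) − σ(q') is at most (1/α) times the Euclidean norm of q − q'. -/
/-!
Along the segment `t ↦ r' + t • v` with `v = r - r'`, the derivative of `p = softmax` is
`p ⊙ (v - ⟨p, v⟩)`. Since `0 ≤ p ≤ 1` and `∑ p = 1`, its squared norm is at most
`∑ p (v - ⟨p, v⟩)² = Var_p(v) ≤ 𝔼_p[v²] ≤ ‖v‖²`, so the mean value inequality makes softmax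
1-Lipschitz. Temperature `α` rescales the input by `1 / α`.
-/

open Real Finset WithLp

noncomputable def softmax {ι : Type*} [Fintype ι] (r : ι → ℝ) (a : ι) : ℝ :=
  exp (r a) / ∑ b, exp (r b)

section

variable {ι : Type*} [Fintype ι]

lemma norm_toLp_eq_sqrt_sum_sq (x : ι → ℝ) : ‖toLp 2 x‖ = √(∑ a, x a ^ 2) := by
  simp [EuclideanSpace.norm_eq]

lemma sum_sq_mul_sub_weightedMean_le {p : ι → ℝ} (hp0 : ∀ a, 0 ≤ p a) (hp1 : ∑ a, p a = 1)
    (v : ι → ℝ) : ∑ a, (p a * (v a - ∑ b, p b * v b)) ^ 2 ≤ ∑ a, v a ^ 2 := by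
  set m := ∑ b, p b * v b
  have hp_le_one (a : ι) : p a ≤ 1 :=
    hp1 ▸ Finset.single_le_sum (fun b _ => hp0 b) (Finset.mem_univ a)
  have hvariance : ∑ a, p a * (v a - m) ^ 2 = ∑ a, p a * v a ^ 2 - m ^ 2 := by
    have hcross : ∑ a, p a * (2 * v a * m) = 2 * m ^ 2 := by
      simp_rw [show ∀ a, p a * (2 * v a * m) = 2 * m * (p a * v a) from fun a => by ring,
        ← Finset.mul_sum]
      ring
    simp only [sub_sq, mul_add, mul_sub, Finset.sum_add_distrib, Finset.sum_sub_distrib,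
      ← Finset.sum_mul, hp1, hcross]
    ring
  calc ∑ a, (p a * (v a - m)) ^ 2
      ≤ ∑ a, p a * (v a - m) ^ 2 := by
        gcongr with a
        rw [mul_pow]
        gcongr
        nlinarith [hp0 a, hp_le_one a]
    _ = ∑ a, p a * v a ^ 2 - m ^ 2 := hvariance
    _ ≤ ∑ a, p a * v a ^ 2 := by linarith [sq_nonneg m]
    _ ≤ ∑ a, v a ^ 2 := by
        gcongr with a
        exact mul_le_of_le_one_left (sq_nonneg _) (hp_le_one a)

lemma softmax_nonneg (r : ι → ℝ) (a : ι) : 0 ≤ softmax r a := by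
  unfold softmax; positivity

lemma sum_softmax [Nonempty ι] (r : ι → ℝ) : ∑ a, softmax r a = 1 := by
  simp only [softmax, ← Finset.sum_div]
  exact div_self (Finset.sum_pos (fun b _ => exp_pos _) univ_nonempty).ne'

lemma hasDerivAt_softmax_add_smul (r v : ι → ℝ) (t : ℝ) (a : ι) :
    HasDerivAt (fun s : ℝ => softmax (r + s • v) a)
      (softmax (r + t • v) a * (v a - ∑ b, softmax (r + t • v) b * v b)) t := by
  have : Nonempty ι := ⟨a⟩
  have hexp (b : ι) : HasDerivAt (fun s : ℝ => exp ((r + s • v) b))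
      (exp ((r + t • v) b) * v b) t := by
    simpa using (((hasDerivAt_id t).mul_const (v b)).const_add (r b)).exp
  have hS : ∑ b, exp ((r + t • v) b) ≠ 0 :=
    (Finset.sum_pos (fun b _ => exp_pos _) univ_nonempty).ne'
  refine ((hexp a).div (HasDerivAt.fun_sum fun b _ => hexp b) hS).congr_deriv ?_
  simp only [softmax]
  field_simp
  rw [← Finset.sum_div, mul_sub, mul_div_cancel₀ _ hS]
  ring

theorem norm_toLp_softmax_sub_softmax_le (r r' : ι → ℝ) :
    ‖toLp 2 (softmax r - softmax r')‖ ≤ ‖toLp 2 (r - r')‖ := by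
  cases isEmpty_or_nonempty ι
  · simp [Subsingleton.elim (toLp 2 (softmax r - softmax r')) 0]
  set v := r - r'
  let p (t : ℝ) : ι → ℝ := softmax (r' + t • v)
  let p' (t : ℝ) : ι → ℝ := fun a => p t a * (v a - ∑ b, p t b * v b)
  have hderiv (t : ℝ) :
      HasDerivAt (fun s => (toLp 2 (p s) : EuclideanSpace ℝ ι)) (toLp 2 (p' t)) t :=
    (PiLp.hasFDerivAt_toLp 2 (p t)).comp_hasDerivAt t
      (hasDerivAt_pi.2 fun a => hasDerivAt_softmax_add_smul r' v t a)
  have hbound (t : ℝ) : ‖toLp 2 (p' t)‖ ≤ ‖toLp 2 v‖ := by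
    simp only [norm_toLp_eq_sqrt_sum_sq]
    exact sqrt_le_sqrt (sum_sq_mul_sub_weightedMean_le (softmax_nonneg _) (sum_softmax _) v)
  simpa [p, v] using norm_image_sub_le_of_norm_deriv_le_segment_01'
    (fun t _ => (hderiv t).hasDerivWithinAt) (fun t _ => hbound t)

end

theorem softmax_lipschitz_general (n : ℕ) (α : ℝ) (hα : 0 < α) (q q' : Fin n → ℝ) :
    Real.sqrt (∑ a, (Real.exp (q a / α) / (∑ b, Real.exp (q b / α))
        - Real.exp (q' a / α) / (∑ b, Real.exp (q' b / α))) ^ 2)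
      ≤ (1 / α) * Real.sqrt (∑ a, (q a - q' a) ^ 2) := by
  have hscale : (fun a => q a / α) - (fun a => q' a / α) = (1 / α) • (q - q') := by
    ext a; simp only [Pi.sub_apply, Pi.smul_apply, smul_eq_mul]; ring
  have h := norm_toLp_softmax_sub_softmax_le (fun a => q a / α) (fun a => q' a / α)
  rw [hscale, WithLp.toLp_smul, norm_smul, Real.norm_of_nonneg (by positivity)] at h
  simpa only [norm_toLp_eq_sqrt_sum_sq, Pi.sub_apply, softmax] using h

/-- The softmax with temperature α is (1/α)-Lipschitz in the Euclidean norm. -/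
theorem softmax_lipschitz (n : ℕ) (hn : 0 < n) (α : ℝ) (hα : 0 < α) (q q' : Fin n → ℝ) :
    Real.sqrt (∑ a, (Real.exp (q a / α) / (∑ b, Real.exp (q b / α))
        - Real.exp (q' a / α) / (∑ b, Real.exp (q' b / α))) ^ 2)
      ≤ (1 / α) * Real.sqrt (∑ a, (q a - q' a) ^ 2) :=
  softmax_lipschitz_general n α hα q q'
end

section
/- Let H be the weighted L2 inner product space on a finite state-action set with weight μ(s,a) > 0 on its support, and let P be a substochastic linear operator on H with operator norm at most γ < 1 in the sup norm. Then for any q⋆ ∈ H, the function l⋆ := ((I − γP^T)^{-1}(μ·q⋆))/μ satisfies ⟨l⋆, (I − γP)q⟩_H = ⟨q⋆, q⟩_H for all q ∈ H, where P^T is the adjoint with respect to the unweighted L2 inner product on the support. -/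
open Finset

namespace WeightedAdjoint

variable {X : Type*} [Fintype X] (μ : X → ℝ)

/-- The unweighted inner product `⟨f, g⟩_{H'}` on the support of `μ`. -/
noncomputable def supportInner (f g : X → ℝ) : ℝ :=
  ∑ x, if 0 < μ x then f x * g x else 0

variable {μ}

theorem supportInner_sub_left (f f' g : X → ℝ) :
    supportInner μ (f - f') g = supportInner μ f g - supportInner μ f' g := by
  simp only [supportInner, ← sum_sub_distrib]
  refine sum_congr rfl fun x _ => ?_
  split_ifs <;> simp [sub_mul]

theorem supportInner_sub_right (f g g' : X → ℝ) :
    supportInner μ f (g - g') = supportInner μ f g - supportInner μ f g' := by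
  simp only [supportInner, ← sum_sub_distrib]
  refine sum_congr rfl fun x _ => ?_
  split_ifs <;> simp [mul_sub]

theorem supportInner_smul_left (c : ℝ) (f g : X → ℝ) :
    supportInner μ (c • f) g = c * supportInner μ f g := by
  simp only [supportInner, mul_sum]
  refine sum_congr rfl fun x _ => ?_
  split_ifs <;> simp [mul_assoc]

theorem supportInner_smul_right (c : ℝ) (f g : X → ℝ) :
    supportInner μ f (c • g) = c * supportInner μ f g := by
  simp only [supportInner, mul_sum]
  refine sum_congr rfl fun x _ => ?_
  split_ifs <;> simp [mul_left_comm]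

theorem supportInner_congr_left {f f' : X → ℝ} (h : ∀ x, 0 < μ x → f x = f' x) (g : X → ℝ) :
    supportInner μ f g = supportInner μ f' g := by
  refine sum_congr rfl fun x _ => ?_
  split_ifs with hx
  · rw [h x hx]
  · rfl

theorem sum_mul_mul_eq_supportInner (hμ : ∀ x, 0 ≤ μ x) (f g : X → ℝ) :
    ∑ x, f x * g x * μ x = supportInner μ (fun x => f x * μ x) g := by
  refine sum_congr rfl fun x _ => ?_
  rcases (hμ x).eq_or_lt with h | h
  · simp [← h]
  · rw [if_pos h]; ring

end WeightedAdjoint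

open WeightedAdjoint in
theorem adjoint_identity_general (X : Type*) [Fintype X] (μ : X → ℝ)
    (hμ0 : ∀ x, 0 ≤ μ x)
    (γ : ℝ)
    (P Pt : (X → ℝ) →ₗ[ℝ] (X → ℝ))
    (hadj : ∀ f g : X → ℝ,
      ∑ x, (if 0 < μ x then f x * P g x else 0)
        = ∑ x, (if 0 < μ x then Pt f x * g x else 0))
    (qstar lstar : X → ℝ)
    (hl : ∀ x, 0 < μ x →
      lstar x * μ x - γ * Pt (fun y => lstar y * μ y) x = μ x * qstar x) :
    ∀ q : X → ℝ, ∑ x, lstar x * (q x - γ * P q x) * μ x = ∑ x, qstar x * q x * μ x := by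
  intro q
  set ml : X → ℝ := fun y => lstar y * μ y
  calc ∑ x, lstar x * (q x - γ * P q x) * μ x
      = supportInner μ ml (q - γ • P q) := sum_mul_mul_eq_supportInner hμ0 lstar _
    _ = supportInner μ ml q - γ * supportInner μ (Pt ml) q := by
        rw [supportInner_sub_right, supportInner_smul_right,
          show supportInner μ ml (P q) = supportInner μ (Pt ml) q from hadj ml q]
    _ = supportInner μ (ml - γ • Pt ml) q := by
        rw [supportInner_sub_left, supportInner_smul_left]
    _ = supportInner μ (fun x => qstar x * μ x) q :=
        supportInner_congr_left (fun x hx => (hl x hx).trans (mul_comm _ _)) q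
    _ = ∑ x, qstar x * q x * μ x := (sum_mul_mul_eq_supportInner hμ0 qstar q).symm

/-- Adjoint identity: if l⋆ satisfies (I − γ Pᵀ)(μ·l⋆) = μ·q⋆ on the support of μ, where Pᵀ is
the adjoint of P w.r.t. the unweighted inner product on the support, then
⟨l⋆, (I − γP) q⟩_H = ⟨q⋆, q⟩_H for all q, for the μ-weighted inner product ⟨·,·⟩_H. -/
theorem adjoint_identity (X : Type*) [Fintype X] (μ : X → ℝ)
    (hμ0 : ∀ x, 0 ≤ μ x) (hμ1 : ∑ x, μ x = 1)
    (γ : ℝ) (hγ0 : 0 ≤ γ) (hγ1 : γ < 1)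
    (P Pt : (X → ℝ) →ₗ[ℝ] (X → ℝ))
    (hPsub : ∀ f : X → ℝ, ∀ C : ℝ, (∀ x, |f x| ≤ C) → ∀ x, |P f x| ≤ C)
    (hPsupp : ∀ f : X → ℝ, (∀ x, μ x = 0 → f x = 0) → ∀ x, μ x = 0 → P f x = 0)
    (hadj : ∀ f g : X → ℝ,
      ∑ x, (if 0 < μ x then f x * P g x else 0)
        = ∑ x, (if 0 < μ x then Pt f x * g x else 0))
    (qstar lstar : X → ℝ)
    (hl : ∀ x, 0 < μ x →
      lstar x * μ x - γ * Pt (fun y => lstar y * μ y) x = μ x * qstar x) :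
    ∀ q : X → ℝ, ∑ x, lstar x * (q x - γ * P q x) * μ x = ∑ x, qstar x * q x * μ x :=
  adjoint_identity_general X μ hμ0 γ P Pt hadj qstar lstar hl
end

section
/- Let L: Q × W → ℝ with q⋆ ∈ Q and l⋆ ∈ W satisfying: (i) L(q⋆, l) ≤ L(q⋆, l⋆) for all l ∈ W; (ii) (1/2)D(q) ≤ L(q, l⋆) − L(q⋆, l⋆) for all q ∈ Q, where D: Q → ℝ≥0. Let L̂: Q × W → ℝ be an approximation with sup_{q∈Q, l∈W} |L(q,l) − L̂(q,l)| ≤ ε. Then any q̂ ∈ argmin_{q∈Q} max_{l∈W} L̂(q,l) satisfies D(q̂) ≤ 4ε. -/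
/-!
Uniform ε-closeness moves every inner maximum by at most ε. Hence the loss of `q̂` against `l⋆`
is at most `max L̂(q̂, ·) + ε ≤ max L̂(q⋆, ·) + ε ≤ max L(q⋆, ·) + 2ε`, and by (i) the last maximum
is `L(q⋆, l⋆)`. So the excess loss `L(q̂, l⋆) - L(q⋆, l⋆)` is at most `2ε`, and (ii) turns this into
`D(q̂) ≤ 4ε`.
-/

lemma Finset.sup'_le_sup'_add_of_le_add {ι G : Type*} [AddGroup G] [LinearOrder G]
    [AddRightMono G] {s : Finset ι} (hs : s.Nonempty) {f g : ι → G} {c : G}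
    (h : ∀ i ∈ s, f i ≤ g i + c) : s.sup' hs f ≤ s.sup' hs g + c := by
  rw [Finset.sup'_add]
  exact Finset.sup'_mono_fun h

theorem approx_saddle_bound_general (Q W : Type*) [Fintype W] [Nonempty W]
    (L Lhat : Q → W → ℝ) (D : Q → ℝ)
    (ε : ℝ)
    (happrox : ∀ q l, |L q l - Lhat q l| ≤ ε)
    (qstar : Q) (lstar : W)
    (hi : ∀ l, L qstar l ≤ L qstar lstar)
    (hii : ∀ q, (1 / 2) * D q ≤ L q lstar - L qstar lstar)
    (qhat : Q)
    (hqhat : ∀ q, Finset.univ.sup' Finset.univ_nonempty (Lhat qhat)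
        ≤ Finset.univ.sup' Finset.univ_nonempty (Lhat q)) :
    D qhat ≤ 4 * ε := by
  have hclose (q : Q) (l : W) := abs_sub_le_iff.mp (happrox q l)
  have hexcess : L qhat lstar ≤ L qstar lstar + 2 * ε := calc
    L qhat lstar ≤ Lhat qhat lstar + ε := by linarith [hclose qhat lstar]
    _ ≤ Finset.univ.sup' Finset.univ_nonempty (Lhat qhat) + ε := by
      gcongr; exact Finset.le_sup' _ (Finset.mem_univ lstar)
    _ ≤ Finset.univ.sup' Finset.univ_nonempty (Lhat qstar) + ε := by linarith [hqhat qstar]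
    _ ≤ Finset.univ.sup' Finset.univ_nonempty (L qstar) + ε + ε := by
      gcongr
      exact Finset.sup'_le_sup'_add_of_le_add _ fun l _ ↦ by linarith [hclose qstar l]
    _ ≤ L qstar lstar + 2 * ε := by
      linarith [Finset.sup'_le Finset.univ_nonempty (L qstar) fun l _ ↦ hi l]
  linarith [hii qhat]

/-- Approximate minimax with a saddle-type comparator: if L̂ is uniformly ε-close to L,
(q⋆,l⋆) satisfies (i) and the quadratic-growth condition (ii) with discrepancy D,
then the minimax solution q̂ of L̂ satisfies D(q̂) ≤ 4ε. -/
theorem approx_saddle_bound (Q W : Type*) [Fintype Q] [Fintype W] [Nonempty Q] [Nonempty W]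
    (L Lhat : Q → W → ℝ) (D : Q → ℝ) (hD : ∀ q, 0 ≤ D q)
    (ε : ℝ) (hε : 0 ≤ ε)
    (happrox : ∀ q l, |L q l - Lhat q l| ≤ ε)
    (qstar : Q) (lstar : W)
    (hi : ∀ l, L qstar l ≤ L qstar lstar)
    (hii : ∀ q, (1 / 2) * D q ≤ L q lstar - L qstar lstar)
    (qhat : Q)
    (hqhat : ∀ q, Finset.univ.sup' Finset.univ_nonempty (Lhat qhat)
        ≤ Finset.univ.sup' Finset.univ_nonempty (Lhat q)) :
    D qhat ≤ 4 * ε :=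
  approx_saddle_bound_general Q W L Lhat D ε happrox qstar lstar hi hii qhat hqhat
end

section
/- Contraction of the soft Bellman operator: the operator (Tq)(s,a) = r(s,a) + γ·E_{s'∼P(·|s,a)}[α·log(∑_{a'} exp(q(s',a')/α)·π_b(a'|s'))] is a γ-contraction in the sup norm on bounded functions q: S × A → ℝ, for any α > 0 and probability weights π_b(·|s') summing to 1. -/
/-!
The soft maximum `α log ∑ exp (x a / α) w a` is monotone in `x` and commutes with adding a
constant, and any such map is 1-Lipschitz for the sup norm: `x ≤ y + M` gives
`f x ≤ f (y + M) = f y + M`. Averaging over `s' ∼ P(·|s,a)` does not increase the sup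
distance, and the factor `γ` gives the contraction.
-/

open Finset Real

theorem abs_sub_le_of_monotone_of_map_add_const {ι : Type*} {f : (ι → ℝ) → ℝ}
    (hmono : Monotone f) (hadd : ∀ x c, f (fun i => x i + c) = f x + c)
    {x y : ι → ℝ} {M : ℝ} (hxy : ∀ i, |x i - y i| ≤ M) : |f x - f y| ≤ M := by
  have one_side : ∀ {u v : ι → ℝ}, (∀ i, u i - v i ≤ M) → f u - f v ≤ M := by
    intro u v h
    have := hmono fun i => show u i ≤ v i + M by linarith [h i]
    rw [hadd] at this
    linarith
  rw [abs_sub_le_iff]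
  exact ⟨one_side fun i => (abs_le.1 (hxy i)).2,
    one_side fun i => by linarith [(abs_le.1 (hxy i)).1]⟩

theorem abs_sum_mul_sub_sum_mul_le {ι : Type*} {s : Finset ι} {p f g : ι → ℝ} {M : ℝ}
    (hp0 : ∀ i ∈ s, 0 ≤ p i) (hp1 : ∑ i ∈ s, p i = 1) (hfg : ∀ i ∈ s, |f i - g i| ≤ M) :
    |∑ i ∈ s, p i * f i - ∑ i ∈ s, p i * g i| ≤ M := by
  rw [← sum_sub_distrib]
  calc |∑ i ∈ s, (p i * f i - p i * g i)|
      ≤ ∑ i ∈ s, |p i * f i - p i * g i| := abs_sum_le_sum_abs _ _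
    _ ≤ ∑ i ∈ s, p i * M := by
        refine sum_le_sum fun i hi => ?_
        rw [← mul_sub, abs_mul, abs_of_nonneg (hp0 i hi)]
        exact mul_le_mul_of_nonneg_left (hfg i hi) (hp0 i hi)
    _ = M := by rw [← sum_mul, hp1, one_mul]

noncomputable def softMax {A : Type*} [Fintype A] (α : ℝ) (w x : A → ℝ) : ℝ :=
  α * log (∑ a, exp (x a / α) * w a)

section softMax

variable {A : Type*} [Fintype A] {α : ℝ} {w : A → ℝ}

theorem sum_exp_mul_pos (hw0 : ∀ a, 0 ≤ w a) (hw : ∃ a, 0 < w a) (x : A → ℝ) :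
    0 < ∑ a, exp (x a / α) * w a := by
  obtain ⟨a, ha⟩ := hw
  exact sum_pos' (fun b _ => mul_nonneg (exp_pos _).le (hw0 b))
    ⟨a, mem_univ a, mul_pos (exp_pos _) ha⟩

theorem softMax_mono (hα : 0 < α) (hw0 : ∀ a, 0 ≤ w a) (hw : ∃ a, 0 < w a) :
    Monotone (softMax α w) := by
  intro x y hxy
  refine mul_le_mul_of_nonneg_left (log_le_log (sum_exp_mul_pos hw0 hw x) ?_) hα.le
  gcongr with a
  · exact hw0 a
  · exact hxy a

theorem softMax_add_const (hα : α ≠ 0) (hw0 : ∀ a, 0 ≤ w a) (hw : ∃ a, 0 < w a)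
    (x : A → ℝ) (c : ℝ) : softMax α w (fun a => x a + c) = softMax α w x + c := by
  have hsum : ∑ a, exp ((x a + c) / α) * w a = exp (c / α) * ∑ a, exp (x a / α) * w a := by
    rw [mul_sum]
    refine sum_congr rfl fun a _ => ?_
    rw [add_div, exp_add]
    ring
  rw [softMax, softMax, hsum, log_mul (exp_pos _).ne' (sum_exp_mul_pos hw0 hw x).ne', log_exp]
  field_simp
  ring

theorem abs_softMax_sub_le [Nonempty A] (hα : 0 < α) (hw0 : ∀ a, 0 ≤ w a) {x y : A → ℝ} {M : ℝ}
    (hxy : ∀ a, |x a - y a| ≤ M) : |softMax α w x - softMax α w y| ≤ M := by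
  by_cases hw : ∃ a, 0 < w a
  · exact abs_sub_le_of_monotone_of_map_add_const (softMax_mono hα hw0 hw)
      (softMax_add_const hα.ne' hw0 hw) hxy
  · have hw_zero : ∀ a, w a = 0 := fun a => le_antisymm (not_lt.1 fun h => hw ⟨a, h⟩) (hw0 a)
    have hM : 0 ≤ M := (abs_nonneg _).trans (hxy (Classical.arbitrary A))
    simpa [softMax, hw_zero] using hM

end softMax

theorem soft_bellman_contraction_general (S A : Type*) [Fintype S] [Fintype A]
    [Nonempty S] [Nonempty A]
    (γ α : ℝ) (hγ0 : 0 ≤ γ) (hα : 0 < α)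
    (r : S → A → ℝ)
    (P : S → A → S → ℝ) (hP0 : ∀ s a s', 0 ≤ P s a s') (hP1 : ∀ s a, ∑ s', P s a s' = 1)
    (πb : S → A → ℝ) (hπb0 : ∀ s a, 0 ≤ πb s a)
    (T : (S → A → ℝ) → S → A → ℝ)
    (hT : ∀ q s a, T q s a = r s a + γ * ∑ s', P s a s' *
        (α * Real.log (∑ a', Real.exp (q s' a' / α) * πb s' a'))) :
    ∀ q1 q2 : S → A → ℝ, ∀ s a,
      |T q1 s a - T q2 s a|
        ≤ γ * Finset.univ.sup' Finset.univ_nonempty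
            (fun p : S × A => |q1 p.1 p.2 - q2 p.1 p.2|) := by
  intro q1 q2 s a
  set M := univ.sup' univ_nonempty fun p : S × A => |q1 p.1 p.2 - q2 p.1 p.2|
  have hdist : ∀ s' a', |q1 s' a' - q2 s' a'| ≤ M := fun s' a' =>
    le_sup' (fun p : S × A => |q1 p.1 p.2 - q2 p.1 p.2|) (mem_univ (s', a'))
  have hdiff : T q1 s a - T q2 s a = γ * (∑ s', P s a s' * softMax α (πb s') (q1 s')
      - ∑ s', P s a s' * softMax α (πb s') (q2 s')) := by
    simp only [hT, softMax]
    ring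
  rw [hdiff, abs_mul, abs_of_nonneg hγ0]
  gcongr
  exact abs_sum_mul_sub_sum_mul_le (fun s' _ => hP0 s a s') (hP1 s a)
    fun s' _ => abs_softMax_sub_le hα (hπb0 s') (hdist s')

/-- The soft Bellman operator
(Tq)(s,a) = r(s,a) + γ E_{s'∼P(·|s,a)}[α log ∑_{a'} exp(q(s',a')/α) π_b(a'|s')]
is a γ-contraction in the sup norm. -/
theorem soft_bellman_contraction (S A : Type*) [Fintype S] [Fintype A]
    [Nonempty S] [Nonempty A]
    (γ α : ℝ) (hγ0 : 0 ≤ γ) (hγ1 : γ < 1) (hα : 0 < α)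
    (r : S → A → ℝ)
    (P : S → A → S → ℝ) (hP0 : ∀ s a s', 0 ≤ P s a s') (hP1 : ∀ s a, ∑ s', P s a s' = 1)
    (πb : S → A → ℝ) (hπb0 : ∀ s a, 0 ≤ πb s a) (hπb1 : ∀ s, ∑ a, πb s a = 1)
    (T : (S → A → ℝ) → S → A → ℝ)
    (hT : ∀ q s a, T q s a = r s a + γ * ∑ s', P s a s' *
        (α * Real.log (∑ a', Real.exp (q s' a' / α) * πb s' a'))) :
    ∀ q1 q2 : S → A → ℝ, ∀ s a,
      |T q1 s a - T q2 s a|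
        ≤ γ * Finset.univ.sup' Finset.univ_nonempty
            (fun p : S × A => |q1 p.1 p.2 - q2 p.1 p.2|) :=
  soft_bellman_contraction_general S A γ α hγ0 hα r P hP0 hP1 πb hπb0 T hT
end

section
/- For a function q on S × A and the entropy-regularized optimal q⋆_α satisfying adjoint identity E[l⋆(s,a)(γ q(s',a') − q(s,a))] = −E[q⋆_α(s,a) q(s,a)] (expectations over (s,a,s') ∼ data distribution, a' ∼ π⋆_α) with l⋆ ≥ 0 pointwise, the Lagrangian L_α(q, l) = E[½q(s,a)² + l(s,a)(r + γα·log∑_{a'}exp(q(s',a')/α)π_b(a'|s') − q(s,a))] satisfies the quadratic growth lower bound L_α(q, l⋆) − L_α(q⋆_α, l⋆) ≥ ½·E[(q(s,a) − q⋆_α(s,a))²] for all q. -/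
/-!
Write `d = q - q⋆`. Pointwise, `½ q² - ½ q⋆² = ½ d² + q⋆ d`, and by convexity of the soft maximum
`α log ∑ exp (·/α) π_b`, whose gradient at `q⋆` is the tilted softmax `π⋆`, the increment of the
Bellman residual is at least `γ E_{π⋆} d - d`. As `l⋆ ≥ 0` this lower bound survives weighting by
`l⋆`, and the adjoint identity turns its expectation into `-E[q⋆ d]`, which cancels the cross term
and leaves `½ E[d²]`.
-/

open Finset Real

theorem sum_mul_le_log_sum_mul_exp {ι : Type*} (s : Finset ι) {μ t : ι → ℝ}
    (hμ0 : ∀ i ∈ s, 0 ≤ μ i) (hμ1 : ∑ i ∈ s, μ i = 1) :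
    ∑ i ∈ s, μ i * t i ≤ log (∑ i ∈ s, μ i * exp (t i)) := by
  have jensen : exp (∑ i ∈ s, μ i * t i) ≤ ∑ i ∈ s, μ i * exp (t i) := by
    simpa using convexOn_exp.map_sum_le hμ0 hμ1 fun i _ => Set.mem_univ (t i)
  exact (le_log_iff_exp_le ((exp_pos _).trans_le jensen)).2 jensen

section WeightedLogSumExp

variable {A : Type*} [Fintype A]

noncomputable def weightedLogSumExp (α : ℝ) (p x : A → ℝ) : ℝ :=
  α * log (∑ a, exp (x a / α) * p a)

theorem sum_mul_sub_le_weightedLogSumExp_sub {α : ℝ} (hα : 0 < α) {p : A → ℝ}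
    (hp : ∀ a, 0 < p a) (x y μ : A → ℝ)
    (hμ : ∀ a, μ a = exp (y a / α) * p a / ∑ b, exp (y b / α) * p b) :
    ∑ a, μ a * (x a - y a) ≤ weightedLogSumExp α p x - weightedLogSumExp α p y := by
  cases isEmpty_or_nonempty A
  · simp [weightedLogSumExp]
  set Z := ∑ b, exp (y b / α) * p b
  have hZ : 0 < Z := sum_pos (fun a _ => mul_pos (exp_pos _) (hp a)) univ_nonempty
  have hμ0 : ∀ a ∈ univ, 0 ≤ μ a := fun a _ =>
    hμ a ▸ div_nonneg (mul_pos (exp_pos _) (hp a)).le hZ.le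
  have hμ1 : ∑ a, μ a = 1 := by simp_rw [hμ, ← sum_div]; exact div_self hZ.ne'
  have hfactor : ∑ a, exp (x a / α) * p a = Z * ∑ a, μ a * exp ((x a - y a) / α) := by
    rw [mul_sum]
    refine sum_congr rfl fun a _ => ?_
    rw [hμ, show x a / α = y a / α + (x a - y a) / α by ring, exp_add]
    field_simp
  have hsum_pos : 0 < ∑ a, μ a * exp ((x a - y a) / α) := by
    refine (mul_pos_iff_of_pos_left hZ).1 (hfactor ▸ ?_)
    exact sum_pos (fun a _ => mul_pos (exp_pos _) (hp a)) univ_nonempty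
  have hjensen := sum_mul_le_log_sum_mul_exp univ (t := fun a => (x a - y a) / α) hμ0 hμ1
  have hscale : ∑ a, μ a * (x a - y a) = α * ∑ a, μ a * ((x a - y a) / α) := by
    rw [mul_sum]; exact sum_congr rfl fun a _ => by field_simp
  rw [hscale, weightedLogSumExp, weightedLogSumExp, hfactor, log_mul hZ.ne' hsum_pos.ne']
  linarith [mul_le_mul_of_nonneg_left hjensen hα.le]

end WeightedLogSumExp

theorem quadratic_growth_soft_lagrangian_general
    (S A Ω : Type*) [Fintype S] [Fintype A] [Fintype Ω]
    (α γ : ℝ) (hα : 0 < α) (hγ0 : 0 ≤ γ)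
    (w : Ω → ℝ) (hw0 : ∀ ω, 0 ≤ w ω)
    (st : Ω → S) (ac : Ω → A) (rew : Ω → ℝ) (st' : Ω → S)
    (πb : S → A → ℝ) (hπb : ∀ s a, 0 < πb s a)
    (qstar lstar : S → A → ℝ) (hl0 : ∀ s a, 0 ≤ lstar s a)
    (πstar : S → A → ℝ)
    (hπstar : ∀ s a, πstar s a =
      Real.exp (qstar s a / α) * πb s a / ∑ b, Real.exp (qstar s b / α) * πb s b)
    (Lag : (S → A → ℝ) → (S → A → ℝ) → ℝ)
    (hLag : ∀ q l, Lag q l = ∑ ω, w ω * (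
      (1 / 2) * q (st ω) (ac ω) ^ 2 + l (st ω) (ac ω) *
        (rew ω + γ * α * Real.log (∑ a', Real.exp (q (st' ω) a' / α) * πb (st' ω) a')
          - q (st ω) (ac ω))))
    (hadj : ∀ q : S → A → ℝ,
      ∑ ω, w ω * (lstar (st ω) (ac ω) *
        (γ * ∑ a', πstar (st' ω) a' * q (st' ω) a' - q (st ω) (ac ω)))
      = - ∑ ω, w ω * (qstar (st ω) (ac ω) * q (st ω) (ac ω))) :
    ∀ q : S → A → ℝ,
      Lag q lstar - Lag qstar lstar
        ≥ (1 / 2) * ∑ ω, w ω * (q (st ω) (ac ω) - qstar (st ω) (ac ω)) ^ 2 := by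
  intro q
  set d : S → A → ℝ := fun s a => q s a - qstar s a
  have hterm : ∀ ω, w ω * ((1 / 2) * d (st ω) (ac ω) ^ 2 + qstar (st ω) (ac ω) * d (st ω) (ac ω)
        + lstar (st ω) (ac ω) * (γ * ∑ a', πstar (st' ω) a' * d (st' ω) a' - d (st ω) (ac ω)))
      ≤ w ω * ((1 / 2) * q (st ω) (ac ω) ^ 2 - (1 / 2) * qstar (st ω) (ac ω) ^ 2
        + lstar (st ω) (ac ω) * (γ * (weightedLogSumExp α (πb (st' ω)) (q (st' ω))
          - weightedLogSumExp α (πb (st' ω)) (qstar (st' ω))) - d (st ω) (ac ω))) := by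
    intro ω
    gcongr w ω * (?_ + _ * (_ * ?_ - _))
    · exact hw0 ω
    · exact le_of_eq (by ring)
    · exact hl0 _ _
    · exact sum_mul_sub_le_weightedLogSumExp_sub hα (hπb _) _ _ _ (hπstar _)
  calc (1 / 2) * ∑ ω, w ω * d (st ω) (ac ω) ^ 2
      = ∑ ω, w ω * ((1 / 2) * d (st ω) (ac ω) ^ 2 + qstar (st ω) (ac ω) * d (st ω) (ac ω)
        + lstar (st ω) (ac ω) * (γ * ∑ a', πstar (st' ω) a' * d (st' ω) a' - d (st ω) (ac ω))) := by
        simp only [mul_add, sum_add_distrib]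
        rw [hadj d, add_neg_cancel_right, mul_sum]
        exact sum_congr rfl fun ω _ => by ring
    _ ≤ _ := sum_le_sum fun ω _ => hterm ω
    _ = Lag q lstar - Lag qstar lstar := by
        rw [hLag, hLag, ← sum_sub_distrib]
        refine sum_congr rfl fun ω _ => ?_
        simp only [weightedLogSumExp, d]
        ring

/-- Quadratic growth of the soft-Q Lagrangian: if l⋆ ≥ 0 and the adjoint identity
E[l⋆(s,a)(γ E_{a'∼π⋆_α(s')} q(s',a') − q(s,a))] = −E[q⋆_α(s,a) q(s,a)] holds for all q,
where π⋆_α is the π_b-tilted softmax of q⋆_α/α, then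
L_α(q, l⋆) − L_α(q⋆_α, l⋆) ≥ ½ E[(q − q⋆_α)²]. -/
theorem quadratic_growth_soft_lagrangian
    (S A Ω : Type*) [Fintype S] [Fintype A] [Fintype Ω]
    (α γ : ℝ) (hα : 0 < α) (hγ0 : 0 ≤ γ) (hγ1 : γ < 1)
    (w : Ω → ℝ) (hw0 : ∀ ω, 0 ≤ w ω) (hw1 : ∑ ω, w ω = 1)
    (st : Ω → S) (ac : Ω → A) (rew : Ω → ℝ) (st' : Ω → S)
    (πb : S → A → ℝ) (hπb : ∀ s a, 0 < πb s a) (hπb1 : ∀ s, ∑ a, πb s a = 1)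
    (qstar lstar : S → A → ℝ) (hl0 : ∀ s a, 0 ≤ lstar s a)
    (πstar : S → A → ℝ)
    (hπstar : ∀ s a, πstar s a =
      Real.exp (qstar s a / α) * πb s a / ∑ b, Real.exp (qstar s b / α) * πb s b)
    (Lag : (S → A → ℝ) → (S → A → ℝ) → ℝ)
    (hLag : ∀ q l, Lag q l = ∑ ω, w ω * (
      (1 / 2) * q (st ω) (ac ω) ^ 2 + l (st ω) (ac ω) *
        (rew ω + γ * α * Real.log (∑ a', Real.exp (q (st' ω) a' / α) * πb (st' ω) a')
          - q (st ω) (ac ω))))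
    (hadj : ∀ q : S → A → ℝ,
      ∑ ω, w ω * (lstar (st ω) (ac ω) *
        (γ * ∑ a', πstar (st' ω) a' * q (st' ω) a' - q (st ω) (ac ω)))
      = - ∑ ω, w ω * (qstar (st ω) (ac ω) * q (st ω) (ac ω))) :
    ∀ q : S → A → ℝ,
      Lag q lstar - Lag qstar lstar
        ≥ (1 / 2) * ∑ ω, w ω * (q (st ω) (ac ω) - qstar (st ω) (ac ω)) ^ 2 :=
  quadratic_growth_soft_lagrangian_general S A Ω α γ hα hγ0 w hw0 st ac rew st' πb hπb qstar lstar
    hl0 πstar hπstar Lag hLag hadj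
end
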